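/- arXiv:2501.16343 — 5 statements merged into one kernel-verified Lean document; each statement's English description precedes it below -/
import Mathlib

section
/- The set S = {(a,b) ∈ 𝔽_{q²} × 𝔽_{q²} : b^q + b = a^m and (a = 0 or a^{m(q−1)} = 1)} has exactly q(m(q−1)+1) = mq² − mq + q elements. -/
open Finset

open Polynomial in
/-- In a field, the number of solutions of `x ^ Q + g(x) = 0` with `natDegree g < Q`
is at most `Q`. -/
lemma aux_card_roots_le {F : Type*} [Field F] [Fintype F] [DecidableEq F] (Q : ℕ)
    (hQ : 0 < Q) (g : F[X]) (hg : g.natDegree < Q) :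
    #(Finset.univ.filter fun x : F => x ^ Q + g.eval x = 0) ≤ Q := by
  set f : F[X] := X ^ Q + g with hf
  have hcoeff : f.coeff Q = 1 := by
    simp [hf, coeff_X_pow, Polynomial.coeff_eq_zero_of_natDegree_lt hg]
  have hfne : f ≠ 0 := by
    intro h
    rw [h] at hcoeff
    simp at hcoeff
  have hdeg : f.natDegree ≤ Q := by
    simpa using natDegree_add_le_of_le (le_of_eq (natDegree_X_pow Q)) hg.le
  have hsubset : (Finset.univ.filter fun x : F => x ^ Q + g.eval x = 0) ⊆
      f.roots.toFinset := by
    intro x hx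
    rw [Finset.mem_filter] at hx
    rw [Multiset.mem_toFinset, Polynomial.mem_roots hfne]
    simp [Polynomial.IsRoot, hf, hx.2]
  calc #(Finset.univ.filter fun x : F => x ^ Q + g.eval x = 0)
      ≤ #f.roots.toFinset := Finset.card_le_card hsubset
    _ ≤ Multiset.card f.roots := Multiset.toFinset_card_le _
    _ ≤ f.natDegree := Polynomial.card_roots' f
    _ ≤ Q := hdeg

theorem stmt_1 (p t q m : ℕ) (hp : p.Prime) (ht : 1 ≤ t) (hq : q = p ^ t)
    (hm : 0 < m) (hmdvd : m ∣ q + 1) (hpm : p ∣ m - 1)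
    (F : Type*) [Field F] [Fintype F] (hF : Fintype.card F = q ^ 2)
    (S : Finset (F × F))
    (hS : ∀ ab : F × F, ab ∈ S ↔
      (ab.2 ^ q + ab.2 = ab.1 ^ m ∧ (ab.1 = 0 ∨ ab.1 ^ (m * (q - 1)) = 1))) :
    S.card = q * (m * (q - 1) + 1) := by
  classical
  haveI : Fact p.Prime := ⟨hp⟩
  have hq2 : 2 ≤ q := by
    rw [hq]
    calc 2 ≤ p := hp.two_le
      _ ≤ p ^ t := Nat.le_self_pow (by omega) p
  have hq0 : 0 < q := by omega
  -- the characteristic of F is p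
  haveI hcharP : CharP F p := by
    obtain ⟨r, hr⟩ := CharP.exists F
    haveI := hr
    have hrprime : r.Prime := CharP.char_is_prime F r
    obtain ⟨nn, hn1, hn2⟩ := FiniteField.card F r
    have hdvd : r ∣ q ^ 2 := by
      rw [← hF, hn2]
      exact dvd_pow_self r (by positivity)
    have : r ∣ p := by
      have : r ∣ p ^ (t * 2) := by rwa [hq, ← pow_mul] at hdvd
      exact hrprime.dvd_of_dvd_pow this
    have : r = p := (Nat.prime_dvd_prime_iff_eq hrprime hp).mp this
    subst this
    exact hr
  -- Frobenius additivity
  have hfrob : ∀ x y : F, (x + y) ^ q = x ^ q + y ^ q := by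
    intro x y
    rw [hq]
    exact add_pow_char_pow x y p t
  have hsub : ∀ x y : F, (x - y) ^ q = x ^ q - y ^ q := by
    intro x y
    have h := hfrob (x - y) y
    rw [sub_add_cancel] at h
    linear_combination -h
  -- the kernel of b ↦ b^q + b
  set K : Finset F := Finset.univ.filter fun b : F => b ^ q + b = 0 with hK
  have hKle : K.card ≤ q := by
    have := aux_card_roots_le (F := F) q hq0 Polynomial.X
      (by rw [Polynomial.natDegree_X]; omega)
    simpa using this
  -- each nonempty fiber has the same cardinality as the kernel
  have hfib : ∀ c : F, (∃ b : F, b ^ q + b = c) →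
      #(Finset.univ.filter fun b : F => b ^ q + b = c) = K.card := by
    rintro c ⟨b₀, hb₀⟩
    apply Finset.card_nbij' (i := fun b => b - b₀) (j := fun k => k + b₀)
    · intro b hb
      rw [Finset.mem_coe, Finset.mem_filter] at hb ⊢
      refine ⟨Finset.mem_univ _, ?_⟩
      rw [hsub]
      linear_combination hb.2 - hb₀
    · intro k hk
      rw [Finset.mem_coe, Finset.mem_filter] at hk ⊢
      refine ⟨Finset.mem_univ _, ?_⟩
      rw [hfrob]
      linear_combination hk.2 + hb₀
    · intro b _; simp
    · intro k _; simp
  -- the range and the "trace-fixed" sets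
  set R : Finset F := Finset.univ.filter fun c : F => ∃ b : F, b ^ q + b = c with hRdef
  set T : Finset F := Finset.univ.filter fun c : F => c ^ q = c with hTdef
  have hRT : R ⊆ T := by
    intro c hc
    rw [hRdef, Finset.mem_filter] at hc
    obtain ⟨b, rfl⟩ := hc.2
    rw [hTdef, Finset.mem_filter]
    refine ⟨Finset.mem_univ _, ?_⟩
    have hb2 : b ^ (q ^ 2) = b := by rw [← hF]; exact FiniteField.pow_card b
    rw [hfrob, ← pow_mul, ← pow_two, hb2]
    ring
  have hTle : T.card ≤ q := by
    have := aux_card_roots_le (F := F) q hq0 (-Polynomial.X)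
      (by rw [Polynomial.natDegree_neg, Polynomial.natDegree_X]; omega)
    refine le_trans (le_of_eq ?_) this
    congr 1
    ext x
    simp only [hTdef, Finset.mem_filter, Finset.mem_univ, true_and,
      Polynomial.eval_neg, Polynomial.eval_X]
    constructor
    · intro h; rw [h]; ring
    · intro h; linear_combination h
  have hRle : R.card ≤ q := le_trans (Finset.card_le_card hRT) hTle
  -- counting: q² = |R| * |K|
  have hsum : q ^ 2 = R.card * K.card := by
    have h1 : (Finset.univ : Finset F).card =
        ∑ c ∈ R, #(Finset.univ.filter fun b : F => b ^ q + b = c) :=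
      Finset.card_eq_sum_card_fiberwise (fun b _ => by
        rw [hRdef, Finset.mem_coe, Finset.mem_filter]; exact ⟨Finset.mem_univ _, ⟨b, rfl⟩⟩)
    rw [← hF, ← Finset.card_univ, h1]
    rw [Finset.sum_congr rfl fun c hc => hfib c (by
      rw [hRdef, Finset.mem_filter] at hc; exact hc.2)]
    rw [Finset.sum_const, smul_eq_mul]
  have hKq : K.card = q := by
    have h2 : q * q ≤ q * K.card := by
      calc q * q = q ^ 2 := (pow_two q).symm
        _ = R.card * K.card := hsum
        _ ≤ q * K.card := Nat.mul_le_mul_right _ hRle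
    exact le_antisymm hKle (Nat.le_of_mul_le_mul_left h2 hq0)
  have hRq : R.card = q := by
    have : R.card * q = q * q := by rw [← pow_two, hsum, hKq]
    exact Nat.eq_of_mul_eq_mul_right hq0 (by rw [this])
  have hReqT : R = T := Finset.eq_of_subset_of_card_le hRT (by rw [hRq]; exact hTle)
  -- the key fiber-count lemma
  have key : ∀ c : F, c ^ q = c →
      #(Finset.univ.filter fun b : F => b ^ q + b = c) = q := by
    intro c hc
    have hcT : c ∈ T := by rw [hTdef, Finset.mem_filter]; exact ⟨Finset.mem_univ _, hc⟩
    have hcR : c ∈ R := by rw [hReqT]; exact hcT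
    rw [hRdef, Finset.mem_filter] at hcR
    rw [hfib c hcR.2, hKq]
  -- count of admissible a's
  set n : ℕ := m * (q - 1) with hn
  have hn0 : 0 < n := by
    apply Nat.mul_pos hm; omega
  have hsq : (q + 1) * (q - 1) + 1 = q ^ 2 := by
    obtain ⟨k, rfl⟩ : ∃ k, q = k + 1 := ⟨q - 1, by omega⟩
    simp only [Nat.add_sub_cancel]
    ring
  have hNval : q ^ 2 - 1 = (q + 1) * (q - 1) := by
    omega
  have hnN : n ∣ q ^ 2 - 1 := by
    rw [hNval, hn]
    exact Nat.mul_dvd_mul_right hmdvd (q - 1)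
  have hN0 : q ^ 2 - 1 ≠ 0 := by
    have : q ≤ q ^ 2 := by nlinarith
    omega
  -- a primitive n-th root of unity exists
  obtain ⟨g, hg⟩ := IsCyclic.exists_ofOrder_eq_natCard (α := Fˣ)
  have hcardU : Nat.card Fˣ = q ^ 2 - 1 := by
    rw [Nat.card_eq_fintype_card, Fintype.card_units, hF]
  have hgN : orderOf g = q ^ 2 - 1 := hg.trans hcardU
  have hζord : orderOf (g ^ ((q ^ 2 - 1) / n)) = n := by
    rw [orderOf_pow, hgN]
    rw [Nat.gcd_eq_right (Nat.div_dvd_of_dvd hnN)]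
    exact Nat.div_div_self hnN hN0
  have hprim : IsPrimitiveRoot ((g ^ ((q ^ 2 - 1) / n) : Fˣ) : F) n := by
    have h1 := IsPrimitiveRoot.orderOf (g ^ ((q ^ 2 - 1) / n))
    rw [hζord] at h1
    exact IsPrimitiveRoot.coe_units_iff.mpr h1
  have hAroots : #(Finset.univ.filter fun a : F => a ^ n = 1) = n := by
    have heq : (Finset.univ.filter fun a : F => a ^ n = 1) =
        Polynomial.nthRootsFinset n (1 : F) := by
      ext x
      simp [Polynomial.mem_nthRootsFinset hn0]
    rw [heq, hprim.card_nthRootsFinset]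
  set A : Finset F := Finset.univ.filter fun a : F => a = 0 ∨ a ^ n = 1 with hAdef
  have hA : A.card = n + 1 := by
    have h0 : (0 : F) ∉ Finset.univ.filter fun a : F => a ^ n = 1 := by
      simp [zero_pow hn0.ne']
    have heq : A = insert (0 : F) (Finset.univ.filter fun a : F => a ^ n = 1) := by
      ext a
      simp [hAdef]
    rw [heq, Finset.card_insert_of_notMem h0, hAroots]
  -- fiberwise count of S
  have hSA : ∀ ab ∈ S, ab.1 ∈ A := by
    intro ab hab
    rw [hAdef, Finset.mem_filter]
    exact ⟨Finset.mem_univ _, ((hS ab).1 hab).2⟩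
  rw [Finset.card_eq_sum_card_fiberwise hSA]
  have hfibS : ∀ a ∈ A, #(S.filter fun ab => ab.1 = a) = q := by
    intro a ha
    rw [hAdef, Finset.mem_filter] at ha
    have hc : (a ^ m) ^ q = a ^ m := by
      rcases ha.2 with h0 | h1
      · subst h0
        rw [zero_pow hm.ne', zero_pow hq0.ne']
      · have hmq : m * q = m + m * (q - 1) := by
          have h1 : 1 + (q - 1) = q := by omega
          conv_lhs => rw [← h1]
          rw [Nat.mul_add, Nat.mul_one]
        rw [← pow_mul, hmq, pow_add, h1, mul_one]
    have heq : S.filter (fun ab => ab.1 = a) =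
        {a} ×ˢ (Finset.univ.filter fun b : F => b ^ q + b = a ^ m) := by
      ext ab
      simp only [Finset.mem_filter, Finset.mem_product, Finset.mem_singleton, hS,
        Finset.mem_univ, true_and]
      constructor
      · rintro ⟨⟨h1, h2⟩, h3⟩
        exact ⟨h3, by rw [← h3]; exact h1⟩
      · rintro ⟨h1, h2⟩
        refine ⟨⟨by rw [h1]; exact h2, ?_⟩, h1⟩
        rw [h1]
        exact ha.2
    rw [heq, Finset.card_product, Finset.card_singleton, one_mul, key _ hc]
  rw [Finset.sum_congr rfl hfibS, Finset.sum_const, hA, smul_eq_mul, hn]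
  ring
end

section
/- For all integers i ≥ 0 and j with 0 ≤ j ≤ q−1 satisfying qi + mj ≤ m(q²−1) − 1, the sum over all (a,b) ∈ S of a^i·b^j equals 0 in 𝔽_{q²}. -/
open Finset

-- nat helper
lemma nat_helper (q s r : ℕ) (hq : 2 ≤ q) (hsr : r + s + 1 ≤ q) :
    q*s + r + q ≤ q*q ∧ (q*s + r + q = q*q → s + 1 = q ∧ r = 0) := by
  have h1 : q*(r+s+1) ≤ q*q := Nat.mul_le_mul_left q hsr
  have h2 : q*(r+s+1) = q*r + q*s + q := by ring
  have h3 : r ≤ q*r := Nat.le_mul_of_pos_left r (by omega)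
  constructor
  · linarith
  · intro heq
    rcases Nat.lt_or_ge (s+1) q with hlt | hge
    · exfalso
      have h4 : q*(s+2) ≤ q*q := Nat.mul_le_mul_left q (by omega)
      have h5 : q*(s+2) = q*s + 2*q := by ring
      have h6 : r + s + 1 ≤ q := hsr
      linarith
    · have hs1 : s + 1 = q := by omega
      have h6 : q*s + q = q*q := by rw [← hs1]; ring
      have : r = 0 := by linarith
      exact ⟨hs1, this⟩

lemma hq21 (q : ℕ) (hq : 1 ≤ q) : q ^ 2 - 1 = (q+1)*(q-1) := by
  have h : q ^ 2 = q * q := sq q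
  obtain ⟨k, rfl⟩ : ∃ k, q = k + 1 := ⟨q - 1, by omega⟩
  have h1 : (k+1)*(k+1) = k*k + 2*k + 1 := by ring
  have hk : k+1-1 = k := by omega
  have h2 : (k+1+1)*(k+1-1) = k*k+2*k := by rw [hk]; ring
  omega

lemma sum_pow_eq {F : Type*} [Field F] [Fintype F] (q : ℕ) (hq2 : 2 ≤ q)
    (hF : Fintype.card F = q ^ 2) (e : ℕ) (he : e ≤ q ^ 2 - 1) :
    ∑ x : F, x ^ e = if e = q ^ 2 - 1 then -1 else 0 := by
  classical
  have hqq : q ^ 2 = q * q := sq q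
  have hq4 : 4 ≤ q * q := Nat.mul_le_mul hq2 hq2
  rcases eq_or_lt_of_le he with heq | hlt
  · rw [if_pos heq]
    subst heq
    have h0 : (0:F) ^ (q ^ 2 - 1) = 0 := zero_pow (by omega)
    calc ∑ x : F, x ^ (q ^ 2 - 1) = ∑ x : F, (1 - if x = 0 then 1 else 0) := by
          refine sum_congr rfl fun x _ => ?_
          by_cases hx : x = 0
          · rw [hx, if_pos rfl, h0]; ring
          · rw [if_neg hx, ← hF, FiniteField.pow_card_sub_one_eq_one x hx]; ring
      _ = (∑ _x : F, (1:F)) - ∑ x : F, (if x = 0 then (1:F) else 0) := by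
          rw [Finset.sum_sub_distrib]
      _ = -1 := by
          rw [Finset.sum_const, Finset.sum_ite_eq' univ (0:F) (fun _ => (1:F))]
          simp [FiniteField.cast_card_eq_zero]
  · rw [if_neg (by omega)]
    exact FiniteField.sum_pow_lt_card_sub_one (K := F) e (by rw [hF]; exact hlt)

lemma exists_primRoot (F : Type*) [Field F] [Fintype F] (N : ℕ) (hN : 0 < N)
    (hdvd : N ∣ Fintype.card F - 1) : ∃ ζ : F, IsPrimitiveRoot ζ N := by
  classical
  obtain ⟨g, hg⟩ := IsCyclic.exists_generator (α := Fˣ)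
  have h1 : orderOf g = Fintype.card Fˣ := by
    rw [orderOf_eq_card_of_forall_mem_zpowers hg, Nat.card_eq_fintype_card]
  have h2 : IsPrimitiveRoot ((g : F)) (Fintype.card F - 1) := by
    have h3 := IsPrimitiveRoot.orderOf (ζ := (g : F))
    rwa [orderOf_units, h1, Fintype.card_units] at h3
  obtain ⟨k, hk⟩ := hdvd
  have hcard : 0 < Fintype.card F - 1 := by
    have := Fintype.one_lt_card (α := F)
    omega
  exact ⟨(g : F) ^ k, h2.pow hcard (by rw [hk, mul_comm])⟩

lemma geom_vanish {F : Type*} [Field F] [Fintype F] (N i : ℕ) (ζ : F)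
    (hζ : IsPrimitiveRoot ζ N) (hN : 0 < N) (hi : ¬ N ∣ i) (f : F → F)
    (h1 : ∀ x : F, x ^ N = 1 → f x = x ^ i) (h0 : ∀ x : F, x ^ N ≠ 1 → f x = 0) :
    ∑ x : F, f x = 0 := by
  have hζN : ζ ^ N = 1 := hζ.pow_eq_one
  have hζ0 : ζ ≠ 0 := fun h => by
    rw [h, zero_pow hN.ne'] at hζN; exact zero_ne_one hζN
  have hζi : ζ ^ i ≠ 1 := fun h => hi ((hζ.pow_eq_one_iff_dvd i).mp h)
  have hbij : ∑ x : F, f (x * ζ) = ∑ x : F, f x :=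
    Fintype.sum_bijective (· * ζ) (mulRight_bijective₀ ζ hζ0) _ _ (fun x => rfl)
  have hmul : ∀ x : F, f (x * ζ) = ζ ^ i * f x := by
    intro x
    by_cases hx : x ^ N = 1
    · rw [h1 x hx, h1 (x * ζ) (by rw [mul_pow, hζN, hx, one_mul]), mul_pow]; ring
    · rw [h0 x hx, h0 (x * ζ) (by rw [mul_pow, hζN, mul_one]; exact hx), mul_zero]
  have hkey : ζ ^ i * ∑ x : F, f x = ∑ x : F, f x := by
    rw [Finset.mul_sum, ← hbij]
    exact sum_congr rfl fun x _ => (hmul x).symm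
  have : (ζ ^ i - 1) * ∑ x : F, f x = 0 := by rw [sub_mul, one_mul, hkey, sub_self]
  rcases mul_eq_zero.mp this with h | h
  · exact absurd (by linear_combination h) hζi
  · exact h

lemma fiber_sum {F : Type*} [Field F] [Fintype F] (q : ℕ) (hq2 : 2 ≤ q)
    (hF : Fintype.card F = q ^ 2)
    (hfrob : ∀ x y : F, (x + y) ^ q = x ^ q + y ^ q)
    (c : F) (hc : c ^ q = c) (j : ℕ) (hj : j ≤ q - 1) (f : F → F)
    (hf1 : ∀ b : F, b ^ q + b = c → f b = b ^ j)
    (hf0 : ∀ b : F, b ^ q + b ≠ c → f b = 0) :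
    ∑ b : F, f b = if j = q - 1 then 1 else 0 := by
  classical
  have hqq : q ^ 2 = q * q := sq q
  have hq4 : 4 ≤ q * q := Nat.mul_le_mul hq2 hq2
  have hneg : ∀ x : F, (-x) ^ q = -(x ^ q) := by
    intro x
    have h := hfrob x (-x)
    rw [add_neg_cancel, zero_pow (by omega)] at h
    linear_combination -h
  have hfix : ∀ b : F, (b ^ q + b - c) ^ q = b ^ q + b - c := by
    intro b
    have h1 : (b ^ q + b - c) = (b ^ q + b) + (-c) := by ring
    rw [h1, hfrob, hfrob, hneg, hc]
    have h2 : (b ^ q) ^ q = b := by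
      rw [← pow_mul, ← hqq, ← hF, FiniteField.pow_card]
    rw [h2]; ring
  have key1 : ∀ b : F, f b = b ^ j - b ^ j * (b ^ q + b - c) ^ (q - 1) := by
    intro b
    by_cases hb : b ^ q + b = c
    · rw [hf1 b hb, hb, sub_self, zero_pow (by omega : q - 1 ≠ 0), mul_zero, sub_zero]
    · rw [hf0 b hb]
      have hy0 : b ^ q + b - c ≠ 0 := sub_ne_zero.mpr hb
      have hy1 : (b ^ q + b - c) ^ (q - 1) = 1 := by
        apply mul_left_cancel₀ hy0
        rw [mul_one, ← pow_succ', Nat.sub_add_cancel (by omega)]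
        exact hfix b
      rw [hy1, mul_one, sub_self]
  rw [sum_congr rfl fun b _ => key1 b, Finset.sum_sub_distrib]
  have hltq : q - 1 < q ^ 2 - 1 := by
    have h5 : q < q * q := by nlinarith
    omega
  have hs1 : ∑ b : F, b ^ j = 0 := by
    have := sum_pow_eq q hq2 hF j (by omega)
    rwa [if_neg (by omega)] at this
  rw [hs1, zero_sub]
  have expand : ∀ b : F, b ^ j * (b ^ q + b - c) ^ (q - 1)
      = ∑ s ∈ range q, ∑ r ∈ range (q - 1 - s + 1),
          ((q-1).choose s : F) * ((q-1-s).choose r : F) * (-c) ^ (q-1-s-r)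
            * b ^ (j + q*s + r) := by
    intro b
    have h1 : b ^ q + b - c = b ^ q + (b + -c) := by ring
    rw [h1, add_pow, show q - 1 + 1 = q from by omega]
    simp only [Finset.mul_sum]
    refine sum_congr rfl fun s hs => ?_
    rw [add_pow]
    simp only [Finset.mul_sum, Finset.sum_mul]
    refine sum_congr rfl fun r hr => ?_
    rw [← pow_mul]
    ring
  rw [sum_congr rfl fun b _ => expand b, Finset.sum_comm]
  have swap2 : ∀ s ∈ range q,
      (∑ b : F, ∑ r ∈ range (q - 1 - s + 1),
        ((q-1).choose s : F) * ((q-1-s).choose r : F) * (-c) ^ (q-1-s-r) * b ^ (j + q*s + r))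
      = ∑ r ∈ range (q - 1 - s + 1),
          ((q-1).choose s : F) * ((q-1-s).choose r : F) * (-c) ^ (q-1-s-r)
            * ∑ b : F, b ^ (j + q*s + r) := by
    intro s _
    rw [Finset.sum_comm]
    exact sum_congr rfl fun r _ => by rw [Finset.mul_sum]
  rw [sum_congr rfl swap2]
  have hterm : ∀ s ∈ range q, ∀ r ∈ range (q - 1 - s + 1),
      ((q-1).choose s : F) * ((q-1-s).choose r : F) * (-c) ^ (q-1-s-r)
        * ∑ b : F, b ^ (j + q*s + r)
      = if j = q - 1 ∧ s = q - 1 ∧ r = 0 then -1 else 0 := by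
    intro s hs r hr
    rw [mem_range] at hs hr
    have hsr : r + s + 1 ≤ q := by omega
    obtain ⟨hle, heq⟩ := nat_helper q s r hq2 hsr
    have hexp_le : j + q*s + r ≤ q ^ 2 - 1 := by omega
    rw [sum_pow_eq q hq2 hF _ hexp_le]
    by_cases hcase : j = q - 1 ∧ s = q - 1 ∧ r = 0
    · obtain ⟨hj1, hs1', hr1⟩ := hcase
      have hqs : q * s + r + q = q * q := by
        subst hr1; subst hs1'
        have h6 : q - 1 + 1 = q := by omega
        calc q * (q-1) + 0 + q = q * ((q-1)+1) := by ring
          _ = q * q := by rw [h6]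
      have hE : j + q*s + r = q ^ 2 - 1 := by omega
      rw [if_pos hE, if_pos (⟨hj1, hs1', hr1⟩ : _ ∧ _ ∧ _), hs1', hr1]
      have e1 : q - 1 - (q - 1) = 0 := by omega
      rw [e1, Nat.choose_self, Nat.choose_self]
      norm_num
    · have hE : j + q*s + r ≠ q ^ 2 - 1 := by
        intro hE
        have h7 : q * s + r + q = q * q := by omega
        obtain ⟨hs1', hr1⟩ := heq h7
        exact hcase ⟨by omega, by omega, hr1⟩
      rw [if_neg hE, if_neg hcase, mul_zero]
  rw [sum_congr rfl (fun s hs => sum_congr rfl (fun r hr => hterm s hs r hr))]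
  by_cases hj' : j = q - 1
  · rw [if_pos hj']
    rw [Finset.sum_eq_single (q-1)]
    · rw [show q - 1 - (q-1) = 0 from by omega, Finset.sum_range_one,
        if_pos (⟨hj', rfl, rfl⟩ : _ ∧ _ ∧ _)]
      norm_num
    · intro s _ hsne
      exact Finset.sum_eq_zero fun r _ => if_neg (by tauto)
    · intro habs
      exact absurd (mem_range.mpr (by omega)) habs
  · rw [if_neg hj']
    rw [Finset.sum_eq_zero fun s _ => Finset.sum_eq_zero fun r _ => if_neg (by tauto)]
    exact neg_zero

theorem stmt_2 (p t q m : ℕ) (hp : p.Prime) (ht : 1 ≤ t) (hq : q = p ^ t)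
    (hm : 0 < m) (hmdvd : m ∣ q + 1) (hpm : p ∣ m - 1)
    (F : Type*) [Field F] [Fintype F] (hF : Fintype.card F = q ^ 2)
    (S : Finset (F × F))
    (hS : ∀ ab : F × F, ab ∈ S ↔
      (ab.2 ^ q + ab.2 = ab.1 ^ m ∧ (ab.1 = 0 ∨ ab.1 ^ (m * (q - 1)) = 1))) :
    ∀ i j : ℕ, j ≤ q - 1 → q * i + m * j ≤ m * (q ^ 2 - 1) - 1 →
      ∑ ab ∈ S, ab.1 ^ i * ab.2 ^ j = 0 := by
  classical
  intro i j hj hij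
  haveI hfact : Fact p.Prime := ⟨hp⟩
  have hq2 : 2 ≤ q := by
    have h1 : 1 < p ^ t := Nat.one_lt_pow (by omega) hp.one_lt
    omega
  have hqq : q ^ 2 = q * q := sq q
  have hq4 : 4 ≤ q * q := Nat.mul_le_mul hq2 hq2
  haveI hring : CharP F (ringChar F) := ringChar.charP F
  obtain ⟨n, hrp, hcard⟩ := FiniteField.card F (ringChar F)
  have hrP : ringChar F = p := by
    have h2 : ringChar F ∣ p ^ (t * 2) := by
      rw [pow_mul, ← hq, ← hF, hcard]
      exact dvd_pow_self _ (by exact_mod_cast n.ne_zero)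
    exact (Nat.prime_dvd_prime_iff_eq hrp hp).mp (hrp.dvd_of_dvd_pow h2)
  haveI hcharP : CharP F p := by rw [← hrP]; exact hring
  have hfrob : ∀ x y : F, (x + y) ^ q = x ^ q + y ^ q := by
    intro x y; rw [hq]; exact add_pow_char_pow x y p t
  set N := m * (q - 1) with hN
  have hN0 : 0 < N := Nat.mul_pos hm (by omega)
  have h21 : q ^ 2 - 1 = (q + 1) * (q - 1) := hq21 q (by omega)
  have hNdvd : N ∣ q ^ 2 - 1 := by rw [h21, hN]; exact mul_dvd_mul hmdvd dvd_rfl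
  have hS' : S = univ.filter (fun ab : F × F =>
      ab.2 ^ q + ab.2 = ab.1 ^ m ∧ (ab.1 = 0 ∨ ab.1 ^ N = 1)) := by
    ext ab; simp [hS ab]
  rw [hS', Finset.sum_filter, Fintype.sum_prod_type]
  dsimp only
  have inner : ∀ a : F,
      (∑ b : F, if (b ^ q + b = a ^ m ∧ (a = 0 ∨ a ^ N = 1)) then a ^ i * b ^ j else 0)
      = if (a = 0 ∨ a ^ N = 1) then a ^ i * (if j = q - 1 then 1 else 0) else 0 := by
    intro a
    by_cases hQ : a = 0 ∨ a ^ N = 1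
    · rw [if_pos hQ]
      have hc : (a ^ m) ^ q = a ^ m := by
        rcases hQ with h | h
        · rw [h, zero_pow hm.ne', zero_pow (by omega)]
        · have hmq : m * q = N + m := by
            rw [hN]
            calc m * q = m * ((q - 1) + 1) := by rw [Nat.sub_add_cancel (by omega : 1 ≤ q)]
              _ = m * (q - 1) + m := by ring
          rw [← pow_mul, hmq, pow_add, h, one_mul]
      have hfib := fiber_sum q hq2 hF hfrob (a ^ m) hc j hj
        (fun b => if b ^ q + b = a ^ m then b ^ j else 0)
        (fun b hb => by simp only [if_pos hb]) (fun b hb => by simp only [if_neg hb])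
      calc (∑ b : F, if (b ^ q + b = a ^ m ∧ (a = 0 ∨ a ^ N = 1)) then a ^ i * b ^ j else 0)
          = ∑ b : F, a ^ i * (if b ^ q + b = a ^ m then b ^ j else 0) := by
            refine sum_congr rfl fun b _ => ?_
            by_cases hb : b ^ q + b = a ^ m
            · rw [if_pos ⟨hb, hQ⟩, if_pos hb]
            · rw [if_neg (by tauto), if_neg hb, mul_zero]
        _ = a ^ i * ∑ b : F, (if b ^ q + b = a ^ m then b ^ j else 0) := by
            rw [Finset.mul_sum]
        _ = a ^ i * (if j = q - 1 then 1 else 0) := by rw [hfib]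
    · rw [if_neg hQ]
      exact Finset.sum_eq_zero fun b _ => if_neg (by tauto)
  rw [sum_congr rfl fun a _ => inner a]
  by_cases hj' : j = q - 1
  · simp only [hj', eq_self_iff_true, if_true, mul_one]
    by_cases hi0 : i = 0
    · subst hi0
      simp only [pow_zero]
      rw [Finset.sum_boole]
      have hfil : univ.filter (fun a : F => a = 0 ∨ a ^ N = 1)
          = insert (0 : F) (univ.filter (fun a : F => a ^ N = 1)) := by
        ext a; simp [Finset.mem_insert, Finset.mem_filter]
      have h0nm : (0 : F) ∉ univ.filter (fun a : F => a ^ N = 1) := by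
        simp [zero_pow hN0.ne']
      have hcroots : (univ.filter (fun a : F => a ^ N = 1)).card = N := by
        obtain ⟨ζ, hζ⟩ := exists_primRoot F N hN0 (by rw [hF]; exact hNdvd)
        have hset : univ.filter (fun a : F => a ^ N = 1) = Polynomial.nthRootsFinset N (1 : F) := by
          ext x; simp [Polynomial.mem_nthRootsFinset hN0]
        rw [hset, hζ.card_nthRootsFinset]
      rw [hfil, Finset.card_insert_of_notMem h0nm, hcroots]
      have hdvd2 : p ∣ N + 1 := by
        have hq0 : p ∣ q := by rw [hq]; exact dvd_pow_self p (by omega)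
        have h9 : N + 1 = (m - 1) * (q - 1) + q := by
          have h8 : m * (q - 1) = (m - 1) * (q - 1) + (q - 1) := by
            calc m * (q - 1) = ((m - 1) + 1) * (q - 1) := by rw [Nat.sub_add_cancel hm]
              _ = (m - 1) * (q - 1) + (q - 1) := by ring
          rw [hN]; omega
        rw [h9]
        exact Nat.dvd_add (Dvd.dvd.mul_right hpm _) hq0
      exact_mod_cast (CharP.cast_eq_zero_iff F p (N + 1)).mpr hdvd2
    · have hsum : (∑ a : F, if (a = 0 ∨ a ^ N = 1) then a ^ i else 0)
          = ∑ a : F, (if a ^ N = 1 then a ^ i else 0) := by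
        refine sum_congr rfl fun a _ => ?_
        by_cases ha : a = 0
        · subst ha
          rw [if_pos (Or.inl rfl), if_neg (by rw [zero_pow hN0.ne']; exact zero_ne_one),
            zero_pow hi0]
        · by_cases haN : a ^ N = 1
          · rw [if_pos (Or.inr haN), if_pos haN]
          · rw [if_neg (by tauto), if_neg haN]
      rw [hsum]
      have hpos : 1 ≤ m * (q ^ 2 - 1) := Nat.mul_pos hm (by omega)
      have hij' : q * i + m * j + 1 ≤ m * (q ^ 2 - 1) := by omega
      have hiltN : i < N := by
        by_contra hcon
        push_neg at hcon
        have e2 : q * N ≤ q * i := Nat.mul_le_mul_left q hcon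
        have e1 : m * (q ^ 2 - 1) = N * q + N := by rw [h21, hN]; ring
        have e3 : q * N = N * q := Nat.mul_comm q N
        have e4 : m * j = N := by rw [hj', hN]
        linarith [hij']
      have hndvd : ¬ N ∣ i := fun hdvd => by
        have := Nat.le_of_dvd (by omega) hdvd
        omega
      obtain ⟨ζ, hζ⟩ := exists_primRoot F N hN0 (by rw [hF]; exact hNdvd)
      exact geom_vanish N i ζ hζ hN0 hndvd _ (fun x hx => if_pos hx) (fun x hx => if_neg hx)
  · simp [hj']
end

section
/- The set S = {(a,b) ∈ 𝔽_{q²} × 𝔽_{q²} : b^q + b = a^{q+1} and (a = 0 or a^s = 1)} has exactly q(s+1) elements. -/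
open Finset Polynomial

theorem stmt_8 (p t q s : ℕ) (hp : p.Prime) (ht : 1 ≤ t) (hq : q = p ^ t)
    (hs : 0 < s) (hsdvd : s ∣ q ^ 2 - 1) (hps : p ∣ s + 1)
    (F : Type*) [Field F] [Fintype F] (hF : Fintype.card F = q ^ 2)
    (S : Finset (F × F))
    (hS : ∀ ab : F × F, ab ∈ S ↔
      (ab.2 ^ q + ab.2 = ab.1 ^ (q + 1) ∧ (ab.1 = 0 ∨ ab.1 ^ s = 1))) :
    S.card = q * (s + 1) := by
  classical
  haveI : Fact p.Prime := ⟨hp⟩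
  have hq2 : 2 ≤ q := hq ▸ (hp.two_le.trans (Nat.le_self_pow (by omega) p))
  have hq0 : 0 < q := by omega
  -- characteristic
  have hrp : (ringChar F).Prime := CharP.char_is_prime F (ringChar F)
  obtain ⟨n, -, hcard⟩ := FiniteField.card F (ringChar F)
  have hpr : p = ringChar F := by
    have h1 : p ∣ (ringChar F) ^ (n : ℕ) := by
      rw [← hcard, hF, hq]
      exact dvd_pow (dvd_pow_self p (by omega)) two_ne_zero
    exact (Nat.prime_dvd_prime_iff_eq hp hrp).mp (hp.dvd_of_dvd_pow h1)
  haveI : CharP F p := hpr ▸ ringChar.charP F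
  have frob : ∀ x y : F, (x + y) ^ q = x ^ q + y ^ q := by
    intro x y; rw [hq]; exact add_pow_char_pow x y p t
  have powcard : ∀ x : F, x ^ q ^ 2 = x := by
    intro x; rw [← hF]; exact FiniteField.pow_card x
  -- root-count bound
  have keybound : ∀ c : F, (univ.filter fun x : F => x ^ q + c * x = 0).card ≤ q := by
    intro c
    set P : F[X] := X ^ q + C c * X with hP
    have hdeglt : (C c * X : F[X]).degree < (q : ℕ) := by
      calc (C c * X : F[X]).degree ≤ 1 := degree_C_mul_X_le c
        _ < (q : ℕ) := by exact_mod_cast Nat.lt_of_lt_of_le one_lt_two hq2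
    have hmono : P.Monic := monic_X_pow_add hdeglt
    have hdeg : P.natDegree = q := by
      have : P.degree = (q : ℕ) := by
        rw [hP]
        rw [degree_add_eq_left_of_degree_lt (by simpa [degree_X_pow] using hdeglt)]
        simp
      exact natDegree_eq_of_degree_eq_some this
    have := card_le_degree_of_subset_roots (p := P)
      (Z := univ.filter fun x : F => x ^ q + c * x = 0) ?_
    · omega
    · intro x hx
      simp only [Finset.mem_val, mem_filter, mem_univ, true_and] at hx
      rw [mem_roots hmono.ne_zero]
      simp [P, IsRoot, hx]
  -- the additive map and its kernel / fibers
  set f : F → F := fun b => b ^ q + b with hf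
  have fadd : ∀ x y : F, f (x + y) = f x + f y := by
    intro x y; simp only [hf, frob]; ring
  set K : Finset F := univ.filter fun b => f b = 0 with hK
  have hKq : K.card ≤ q := by
    have := keybound 1
    simpa [hK, hf] using this
  set R : Finset F := univ.filter fun x : F => x ^ q = x with hR
  have hRq : R.card ≤ q := by
    have := keybound (-1)
    have e : (univ.filter fun x : F => x ^ q + (-1) * x = 0) = R := by
      ext x; simp [hR, sub_eq_zero, neg_mul, ← sub_eq_add_neg]
    rwa [e] at this
  have fiber_card : ∀ c : F, (∃ b, f b = c) →
      (univ.filter fun b => f b = c).card = K.card := by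
    rintro c ⟨b₀, hb₀⟩
    have himg : (univ.filter fun b => f b = c) = K.image (fun k => b₀ + k) := by
      ext b
      simp only [mem_filter, mem_univ, true_and, mem_image, hK]
      constructor
      · intro hb
        refine ⟨b - b₀, ?_, by ring⟩
        have h := fadd b₀ (b - b₀)
        have e : b₀ + (b - b₀) = b := by ring
        rw [e, hb, hb₀] at h
        exact (left_eq_add.mp h)
      · rintro ⟨k, hk, rfl⟩
        rw [fadd, hk, hb₀, add_zero]
    rw [himg, card_image_of_injective _ (add_right_injective b₀)]
  -- partition of F by fibers of f
  have partition : (q : ℕ) ^ 2 = ∑ c ∈ univ.image f, (univ.filter fun b => f b = c).card := by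
    rw [← hF, ← card_univ]
    exact card_eq_sum_card_fiberwise (fun x _ => mem_image_of_mem f (mem_univ x))
  have him_sub : univ.image f ⊆ R := by
    intro c hc
    obtain ⟨b, -, rfl⟩ := mem_image.mp hc
    simp only [hR, mem_filter, mem_univ, true_and, hf]
    rw [frob, ← pow_mul, ← pow_two, powcard b]
    ring
  have him_le : (univ.image f).card ≤ q := (card_le_card him_sub).trans hRq
  have hprod : (q : ℕ) ^ 2 = (univ.image f).card * K.card := by
    rw [partition, Finset.sum_congr rfl (fun c hc => by
      obtain ⟨b, -, hb⟩ := mem_image.mp hc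
      exact fiber_card c ⟨b, hb⟩ : ∀ c ∈ univ.image f,
        (univ.filter fun b => f b = c).card = K.card), sum_const, smul_eq_mul]
  have hKeq : K.card = q := by
    have h1 : q * q ≤ q * K.card := by
      calc q * q = (q:ℕ)^2 := (sq q).symm
        _ = (univ.image f).card * K.card := hprod
        _ ≤ q * K.card := Nat.mul_le_mul_right _ him_le
    have := Nat.le_of_mul_le_mul_left h1 hq0
    omega
  have himeq : (univ.image f).card = q := by
    have h1 : q * q ≤ (univ.image f).card * q := by
      calc q * q = (q:ℕ)^2 := (sq q).symm
        _ = (univ.image f).card * K.card := hprod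
        _ ≤ (univ.image f).card * q := Nat.mul_le_mul_left _ hKq
    have := Nat.le_of_mul_le_mul_right h1 hq0
    omega
  have himR : univ.image f = R := eq_of_subset_of_card_le him_sub (by omega)
  -- each relevant a gives a fiber of size q
  have fibq : ∀ a : F, ((univ : Finset F).filter fun b => f b = a ^ (q + 1)).card = q := by
    intro a
    have hcR : a ^ (q + 1) ∈ R := by
      simp only [hR, mem_filter, mem_univ, true_and]
      rw [← pow_mul]
      have : (q + 1) * q = q ^ 2 + q := by ring
      rw [this, pow_add, powcard, ← pow_succ']
    rw [← himR] at hcR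
    obtain ⟨b, -, hb⟩ := mem_image.mp hcR
    rw [fiber_card _ ⟨b, hb⟩, hKeq]
  -- the set of admissible a's
  set A : Finset F := univ.filter fun a : F => a = 0 ∨ a ^ s = 1 with hA
  have hAcard : A.card = s + 1 := by
    have hq21 : q ^ 2 - 1 ≠ 0 := Nat.sub_ne_zero_of_lt (by nlinarith)
    obtain ⟨g, hg⟩ := IsCyclic.exists_ofOrder_eq_natCard (α := Fˣ)
    have hgord : orderOf g = q ^ 2 - 1 := by
      rw [hg, Nat.card_eq_fintype_card, Fintype.card_units, hF]
    have hdvd2 : (q ^ 2 - 1) / s ∣ q ^ 2 - 1 := Nat.div_dvd_of_dvd hsdvd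
    have hord : orderOf (g ^ ((q ^ 2 - 1) / s)) = s := by
      rw [orderOf_pow, hgord, Nat.gcd_eq_right hdvd2, Nat.div_div_self hsdvd hq21]
    have hζu := IsPrimitiveRoot.orderOf (g ^ ((q ^ 2 - 1) / s))
    rw [hord] at hζu
    have hζ : IsPrimitiveRoot ((g ^ ((q ^ 2 - 1) / s) : Fˣ) : F) s :=
      IsPrimitiveRoot.coe_units_iff.mpr hζu
    have hnth : (nthRootsFinset s (1 : F)).card = s := hζ.card_nthRootsFinset
    have hAeq : A = insert (0 : F) (nthRootsFinset s (1 : F)) := by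
      ext x
      simp [hA, mem_insert, Polynomial.mem_nthRootsFinset hs]
    rw [hAeq, card_insert_of_notMem, hnth]
    rw [Polynomial.mem_nthRootsFinset hs]
    simp [zero_pow hs.ne']
  -- put it together
  have hfst : ∀ x ∈ S, x.1 ∈ A := by
    intro x hx
    simp only [hA, mem_filter, mem_univ, true_and]
    exact ((hS x).mp hx).2
  rw [card_eq_sum_card_fiberwise hfst]
  have hterm : ∀ a ∈ A, (S.filter fun x => x.1 = a).card = q := by
    intro a ha
    have haA : a = 0 ∨ a ^ s = 1 := by simpa [hA] using ha
    have : (S.filter fun x => x.1 = a)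
        = ((univ : Finset F).filter fun b => f b = a ^ (q + 1)).image fun b => (a, b) := by
      ext x
      simp only [mem_filter, mem_image, mem_univ, true_and, hS, hf]
      constructor
      · rintro ⟨⟨h1, -⟩, h2⟩
        exact ⟨x.2, by rw [← h2]; exact h1, by rw [← h2]⟩
      · rintro ⟨b, hb, rfl⟩
        exact ⟨⟨hb, haA⟩, rfl⟩
    rw [this, card_image_of_injective _ (by intro x y h; simpa using h), fibq]
  rw [Finset.sum_congr rfl hterm, sum_const, hAcard, smul_eq_mul, mul_comm]
end

section
/- For all integers i ≥ 0 and j with 0 ≤ j ≤ q−1 satisfying qi + (q+1)j ≤ q(s+q) − 2, the sum over all (a,b) ∈ S of a^i·b^j equals 0 in 𝔽_{q²}. -/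
/-!
Sum over `b` first. For `a ∈ F`, `c = a ^ (q + 1)` satisfies `c ^ q = c`, and the fibre of
`b ↦ b ^ q + b` over such a `c` is a coset `b₀ + K` of the kernel `K = {0} ∪ k₀ μ_{q-1}`, where
`k₀ ^ (q - 1) = -1`. Power sums over `K` vanish in degrees `< q - 1` (the degree-`0` one is `q = 0`)
and equal `1` in degree `q - 1`, so after a binomial expansion the fibre sum of `b ^ j` is `1` if
`j = q - 1` and `0` otherwise. Only `j = q - 1` survives, and then the degree bound forces `i < s`,
leaving `∑ a ^ i` over `{0} ∪ μ_s`: this is `1 + s = 0` for `i = 0` since `p ∣ s + 1`, and `0` for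
`0 < i < s`.
-/

open Finset Polynomial

theorem FiniteField.exists_isPrimitiveRoot_of_dvd {F : Type*} [Field F] [Fintype F] {d : ℕ}
    (hd : d ∣ Fintype.card F - 1) : ∃ ζ : F, IsPrimitiveRoot ζ d := by
  obtain ⟨g, hg⟩ := IsCyclic.exists_ofOrder_eq_natCard (α := Fˣ)
  rw [Nat.card_units, Nat.card_eq_fintype_card] at hg
  have hg' : IsPrimitiveRoot (g : F) (Fintype.card F - 1) :=
    IsPrimitiveRoot.coe_units_iff.2 (hg ▸ IsPrimitiveRoot.orderOf g)
  obtain ⟨e, he⟩ := hd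
  have hpos : 0 < Fintype.card F - 1 := by have := Fintype.one_lt_card (α := F); omega
  exact ⟨_, hg'.pow hpos (he.trans (mul_comm d e))⟩

theorem IsPrimitiveRoot.sum_pow_nthRootsFinset_one {R : Type*} [CommRing R] [IsDomain R]
    {ζ : R} {d : ℕ} (hζ : IsPrimitiveRoot ζ d) (m : ℕ) :
    ∑ x ∈ nthRootsFinset d (1 : R), x ^ m = if d ∣ m then (d : R) else 0 := by
  rcases d.eq_zero_or_pos with rfl | hd
  · simp
  have hmem (x : R) : x ∈ nthRootsFinset d (1 : R) ↔ x ^ d = 1 :=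
    Polynomial.mem_nthRootsFinset hd 1
  split_ifs with hdm
  · obtain ⟨k, rfl⟩ := hdm
    rw [sum_congr rfl fun x hx => by rw [pow_mul, (hmem x).1 hx, one_pow], sum_const,
      hζ.card_nthRootsFinset, nsmul_one]
  · have hshift : ∑ x ∈ nthRootsFinset d (1 : R), (ζ * x) ^ m
        = ∑ x ∈ nthRootsFinset d (1 : R), x ^ m := by
      refine sum_nbij' (ζ * ·) (ζ ^ (d - 1) * ·) (fun x hx => ?_) (fun x hx => ?_)
        (fun x _ => ?_) (fun x _ => ?_) (fun _ _ => rfl)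
      · simpa using mul_mem_nthRootsFinset ((hmem ζ).2 hζ.pow_eq_one) hx
      · simpa using mul_mem_nthRootsFinset ((hmem _).2 (by rw [← pow_mul, mul_comm, pow_mul,
          hζ.pow_eq_one, one_pow])) hx
      · simp only [← mul_assoc, ← pow_succ, Nat.sub_add_cancel hd, hζ.pow_eq_one, one_mul]
      · simp only [← mul_assoc, ← pow_succ', Nat.sub_add_cancel hd, hζ.pow_eq_one, one_mul]
    have hζm : ζ ^ m ≠ 1 := fun h => hdm ((hζ.pow_eq_one_iff_dvd m).1 h)
    simp_rw [mul_pow, ← mul_sum] at hshift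
    by_contra hne
    exact hζm ((mul_eq_right₀ hne).1 hshift)

theorem FiniteField.exists_pow_sub_one_eq_neg_one {F : Type*} [Field F] [Fintype F] {q : ℕ}
    (hF : Fintype.card F = q ^ 2) (hq : 2 ≤ q) : ∃ k : F, k ^ (q - 1) = -1 := by
  rcases Nat.even_or_odd q with hq2 | ⟨r, rfl⟩
  · have hchar : ringChar F = 2 := by
      rw [FiniteField.even_card_iff_char_two, hF, ← Nat.even_iff]
      exact (Nat.even_pow' two_ne_zero).2 hq2
    exact ⟨1, by rw [one_pow, neg_one_eq_one_iff.2 hchar]⟩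
  · have hd : 2 * r * 2 ∣ Fintype.card F - 1 := ⟨r + 1, by rw [hF]; ring_nf; omega⟩
    obtain ⟨ζ, hζ⟩ := exists_isPrimitiveRoot_of_dvd hd
    refine ⟨ζ, ?_⟩
    rw [Nat.add_sub_cancel]
    exact (hζ.pow (by omega) rfl).eq_neg_one_of_two_right

theorem FiniteField.charP_of_card_eq_prime_pow {F : Type*} [Field F] [Fintype F] {p n : ℕ}
    (hp : p.Prime) (hF : Fintype.card F = p ^ n) (hn : n ≠ 0) : CharP F p := by
  have := Fact.mk hp
  have hdvd : p ∣ ringChar F :=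
    (prime_dvd_char_iff_dvd_card p).2 (hF ▸ dvd_pow_self p hn)
  exact ringChar.of_eq ((Nat.prime_dvd_prime_iff_eq hp (CharP.char_is_prime F _)).1 hdvd).symm

theorem sum_pow_filter_eq_zero_or_pow_eq_one {F : Type*} [Field F] [Fintype F] [DecidableEq F]
    {s i : ℕ} (hs : s ∣ Fintype.card F - 1) (hsF : (s : F) + 1 = 0) (hi : i < s) :
    ∑ a ∈ ({a | a = 0 ∨ a ^ s = 1} : Finset F), a ^ i = 0 := by
  have hroots : ({a | a = 0 ∨ a ^ s = 1} : Finset F) = insert 0 (nthRootsFinset s (1 : F)) := by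
    ext a
    simp [mem_nthRootsFinset (hi.trans_le' (Nat.zero_le i))]
  have h0 : (0 : F) ∉ nthRootsFinset s (1 : F) := by
    simp [mem_nthRootsFinset (hi.trans_le' (Nat.zero_le i)), zero_pow (by omega : s ≠ 0)]
  obtain ⟨ζ, hζ⟩ := FiniteField.exists_isPrimitiveRoot_of_dvd hs
  rw [hroots, sum_insert h0, hζ.sum_pow_nthRootsFinset_one]
  rcases i.eq_zero_or_pos with rfl | hi0
  · simpa [add_comm] using hsF
  · have : ¬ s ∣ i := fun h => (Nat.le_of_dvd hi0 h).not_gt hi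
    simp [this, hi0.ne']

section PowAddSelf

variable {F : Type*} [Field F] [Fintype F] [DecidableEq F] {q : ℕ}

theorem filter_pow_add_self_eq_zero_eq_insert (hq : 2 ≤ q) {k₀ : F} (hk₀ : k₀ ^ (q - 1) = -1) :
    ({k | k ^ q + k = 0} : Finset F) =
      insert 0 ((nthRootsFinset (q - 1) (1 : F)).image (k₀ * ·)) := by
  have hk₀0 : k₀ ≠ 0 := by rintro rfl; simp [zero_pow (by omega : q - 1 ≠ 0)] at hk₀
  have hpow (x : F) : x ^ q + x = (x ^ (q - 1) + 1) * x := by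
    rw [add_mul, one_mul, ← pow_succ, Nat.sub_add_cancel (by omega)]
  ext k
  simp only [mem_filter, mem_univ, true_and, mem_insert, mem_image,
    mem_nthRootsFinset (by omega : 0 < q - 1), hpow, mul_eq_zero, ← eq_neg_iff_add_eq_zero]
  constructor
  · rintro (hk | rfl)
    · exact Or.inr ⟨k₀⁻¹ * k, by rw [mul_pow, hk, inv_pow, hk₀]; simp, by field_simp⟩
    · exact Or.inl rfl
  · rintro (rfl | ⟨u, hu, rfl⟩)
    · exact Or.inr rfl
    · exact Or.inl (by rw [mul_pow, hu, hk₀, mul_one])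

theorem sum_pow_filter_pow_add_self_eq_zero (hF : Fintype.card F = q ^ 2) (hq : 2 ≤ q)
    (hqF : (q : F) = 0) {k₀ : F} (hk₀ : k₀ ^ (q - 1) = -1) {m : ℕ} (hm : m ≤ q - 1) :
    ∑ k ∈ ({k | k ^ q + k = 0} : Finset F), k ^ m = if m = q - 1 then 1 else 0 := by
  have hk₀0 : k₀ ≠ 0 := by rintro rfl; simp [zero_pow (by omega : q - 1 ≠ 0)] at hk₀
  have h0 : (0 : F) ∉ (nthRootsFinset (q - 1) (1 : F)).image (k₀ * ·) := by
    simp [hk₀0, mem_nthRootsFinset (by omega : 0 < q - 1), zero_pow (by omega : q - 1 ≠ 0)]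
  obtain ⟨ζ, hζ⟩ := FiniteField.exists_isPrimitiveRoot_of_dvd (F := F) (d := q - 1)
    ⟨q + 1, by rw [hF, mul_comm]; simpa using Nat.sq_sub_sq q 1⟩
  have hq1 : ((q - 1 : ℕ) : F) = -1 := by
    rw [Nat.cast_sub (by omega), hqF, Nat.cast_one, zero_sub]
  rw [filter_pow_add_self_eq_zero_eq_insert hq hk₀, sum_insert h0,
    sum_image fun _ _ _ _ => mul_left_cancel₀ hk₀0]
  simp_rw [mul_pow, ← mul_sum]
  rw [hζ.sum_pow_nthRootsFinset_one, hq1]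
  rcases m.eq_zero_or_pos with rfl | hm0
  · simp [show 0 ≠ q - 1 by omega]
  · rcases hm.eq_or_lt with rfl | hmq
    · simp [hm0.ne', hk₀]
    · have : ¬ q - 1 ∣ m := fun h => (Nat.le_of_dvd hm0 h).not_gt hmq
      simp [hm0.ne', hmq.ne, this]

end PowAddSelf

section Frobenius

variable {F : Type*} [Field F] [Fintype F] [DecidableEq F] {p t q : ℕ} [Fact p.Prime]
  [CharP F p]

theorem filter_pow_add_self_eq_image_add (hq : q = p ^ t) {b₀ c : F} (hb₀ : b₀ ^ q + b₀ = c) :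
    ({b | b ^ q + b = c} : Finset F) = ({k | k ^ q + k = 0} : Finset F).image (· + b₀) := by
  have hfrob (x y : F) : (x + y) ^ q = x ^ q + y ^ q := hq ▸ add_pow_char_pow x y p t
  ext b
  simp only [mem_filter, mem_univ, true_and, mem_image]
  constructor
  · intro hb
    refine ⟨b - b₀, ?_, sub_add_cancel b b₀⟩
    have := hfrob (b - b₀) b₀
    rw [sub_add_cancel] at this
    linear_combination hb - hb₀ - this
  · rintro ⟨k, hk, rfl⟩
    rw [hfrob]
    linear_combination hk + hb₀

theorem exists_pow_add_self_eq (hq : q = p ^ t) (ht : t ≠ 0) (hF : Fintype.card F = q ^ 2)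
    {c : F} (hc : c ^ q = c) : ∃ b : F, b ^ q + b = c := by
  have hq2 : 2 ≤ q := hq ▸ Nat.one_lt_pow ht (Fact.out : p.Prime).one_lt
  have hqF : (q : F) = 0 := (CharP.cast_eq_zero_iff F p q).2 (hq ▸ dvd_pow_self p ht)
  -- If `x ^ q + x` vanished on all of `F`, then `∑ x, x ^ (q - 1)` would be `1` rather than `0`.
  obtain ⟨θ, hθ⟩ : ∃ θ : F, θ ^ q + θ ≠ 0 := by
    by_contra! h
    obtain ⟨k₀, hk₀⟩ := FiniteField.exists_pow_sub_one_eq_neg_one hF hq2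
    have hsum := sum_pow_filter_pow_add_self_eq_zero hF hq2 hqF hk₀ le_rfl
    have hlt : q < q ^ 2 := by nlinarith
    rw [filter_true_of_mem fun x _ => h x, if_pos rfl,
      FiniteField.sum_pow_lt_card_sub_one F _ (by omega)] at hsum
    exact zero_ne_one hsum
  have hτ : (θ ^ q + θ) ^ q = θ ^ q + θ := by
    rw [hq, add_pow_char_pow, ← hq, ← pow_mul, ← sq, ← hF, FiniteField.pow_card, add_comm]
  refine ⟨c * θ / (θ ^ q + θ), ?_⟩
  rw [div_pow, mul_pow, hc, hτ, ← add_div, ← mul_add, mul_div_assoc, div_self hθ, mul_one]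

theorem sum_pow_filter_pow_add_self_eq (hq : q = p ^ t) (ht : t ≠ 0)
    (hF : Fintype.card F = q ^ 2) {c : F} (hc : c ^ q = c) {j : ℕ} (hj : j ≤ q - 1) :
    ∑ b ∈ ({b | b ^ q + b = c} : Finset F), b ^ j = if j = q - 1 then 1 else 0 := by
  have hq2 : 2 ≤ q := hq ▸ Nat.one_lt_pow ht (Fact.out : p.Prime).one_lt
  have hqF : (q : F) = 0 := (CharP.cast_eq_zero_iff F p q).2 (hq ▸ dvd_pow_self p ht)
  obtain ⟨b₀, hb₀⟩ := exists_pow_add_self_eq hq ht hF hc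
  obtain ⟨k₀, hk₀⟩ := FiniteField.exists_pow_sub_one_eq_neg_one hF hq2
  rw [filter_pow_add_self_eq_image_add hq hb₀, sum_image fun _ _ _ _ => add_right_cancel]
  calc ∑ k ∈ ({k | k ^ q + k = 0} : Finset F), (k + b₀) ^ j
      = ∑ m ∈ range (j + 1), (∑ k ∈ ({k | k ^ q + k = 0} : Finset F), k ^ m)
          * b₀ ^ (j - m) * j.choose m := by
        simp_rw [add_pow, sum_mul]
        exact sum_comm
    _ = ∑ m ∈ range (j + 1), if m = q - 1 then b₀ ^ (j - m) * j.choose m else 0 := by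
        refine sum_congr rfl fun m hm => ?_
        rw [sum_pow_filter_pow_add_self_eq_zero hF hq2 hqF hk₀ (by simp at hm; omega)]
        split_ifs <;> ring
    _ = if j = q - 1 then 1 else 0 := by
        rw [sum_ite_eq']
        rcases hj.eq_or_lt with rfl | hjq
        · simp
        · simp [hjq.ne, show ¬ q - 1 < j + 1 by omega]

end Frobenius

theorem stmt_9_general (p t q s : ℕ) (hp : p.Prime) (ht : 1 ≤ t) (hq : q = p ^ t)
    (hsdvd : s ∣ q ^ 2 - 1) (hps : p ∣ s + 1)
    (F : Type*) [Field F] [Fintype F] (hF : Fintype.card F = q ^ 2)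
    (S : Finset (F × F))
    (hS : ∀ ab : F × F, ab ∈ S ↔
      (ab.2 ^ q + ab.2 = ab.1 ^ (q + 1) ∧ (ab.1 = 0 ∨ ab.1 ^ s = 1))) :
    ∀ i j : ℕ, j ≤ q - 1 → q * i + (q + 1) * j ≤ q * (s + q) - 2 →
      ∑ ab ∈ S, ab.1 ^ i * ab.2 ^ j = 0 := by
  classical
  intro i j hj hij
  have := Fact.mk hp
  have := FiniteField.charP_of_card_eq_prime_pow hp (by rw [hF, hq, ← pow_mul])
    (by omega : t * 2 ≠ 0)
  have hnorm (a : F) : (a ^ (q + 1)) ^ q = a ^ (q + 1) := by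
    rw [← pow_mul, add_mul, one_mul, pow_add, ← sq, ← hF, FiniteField.pow_card, pow_succ']
  rw [sum_finset_product S {a | a = 0 ∨ a ^ s = 1} (fun a => {b | b ^ q + b = a ^ (q + 1)})
    (by simp [hS, and_comm])]
  simp_rw [← mul_sum, sum_pow_filter_pow_add_self_eq hq (by omega) hF (hnorm _) hj]
  split_ifs with hjq
  · have hi : i < s := by
      subst hjq
      have hq2 : 2 ≤ q := hq ▸ Nat.one_lt_pow (by omega) hp.one_lt
      have h2 : 2 ≤ q * (s + q) := by nlinarith
      refine Nat.lt_of_mul_lt_mul_left (a := q) ?_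
      zify [hq2.trans' one_le_two, h2] at hij ⊢
      nlinarith
    simp_rw [mul_one]
    refine sum_pow_filter_eq_zero_or_pow_eq_one (hF ▸ hsdvd) ?_ hi
    exact_mod_cast (CharP.cast_eq_zero_iff F p _).2 hps
  · simp

theorem stmt_9 (p t q s : ℕ) (hp : p.Prime) (ht : 1 ≤ t) (hq : q = p ^ t)
    (hs : 0 < s) (hsdvd : s ∣ q ^ 2 - 1) (hps : p ∣ s + 1)
    (F : Type*) [Field F] [Fintype F] (hF : Fintype.card F = q ^ 2)
    (S : Finset (F × F))
    (hS : ∀ ab : F × F, ab ∈ S ↔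
      (ab.2 ^ q + ab.2 = ab.1 ^ (q + 1) ∧ (ab.1 = 0 ∨ ab.1 ^ s = 1))) :
    ∀ i j : ℕ, j ≤ q - 1 → q * i + (q + 1) * j ≤ q * (s + q) - 2 →
      ∑ ab ∈ S, ab.1 ^ i * ab.2 ^ j = 0 :=
  stmt_9_general p t q s hp ht hq hsdvd hps F hF S hS
end

section
/- For all integers i ≥ 0 and j with 0 ≤ j ≤ q−1 satisfying qi + (q+1)j ≤ q·p^k + q² − q − 2, the sum over all (a,b) ∈ S of a^i·b^j equals 0 in 𝔽_{q²}. -/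
open Finset Polynomial

private lemma divQ {F : Type*} [Field F] (L : Polynomial F) {N : ℕ} (hdeg : L.natDegree = N)
    (hN : 0 < N) (v : F) (hv : L.eval v = 0) :
    (X - C v) * (∑ m ∈ range N, C (∑ d ∈ Icc (m+1) N, L.coeff d * v ^ (d-1-m)) * X ^ m) = L := by
  set s : ℕ → F := fun m => ∑ d ∈ Icc (m+1) N, L.coeff d * v ^ (d-1-m) with hs
  set Q : Polynomial F := ∑ m ∈ range N, C (s m) * X ^ m with hQdef
  have hQc : ∀ e, Q.coeff e = if e < N then s e else 0 := by
    intro e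
    rw [hQdef, finset_sum_coeff]
    simp only [coeff_C_mul, coeff_X_pow, mul_ite, mul_one, mul_zero]
    rw [Finset.sum_ite_eq (range N) e s]
    simp [Finset.mem_range]
  have heval : L.coeff 0 + ∑ d ∈ Icc 1 N, L.coeff d * v ^ d = 0 := by
    have h1 : L.eval v = ∑ d ∈ range (N+1), L.coeff d * v ^ d :=
      eval_eq_sum_range' (by omega) v
    have h2 : range (N+1) = insert 0 (Icc 1 N) := by ext x; simp [Nat.lt_succ_iff]; omega
    rw [h1, h2, Finset.sum_insert (by simp)] at hv
    simpa using hv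
  ext e
  rw [sub_mul, coeff_sub, coeff_C_mul]
  rcases Nat.eq_zero_or_pos e with he | he
  · subst he
    rw [mul_coeff_zero, coeff_X_zero, zero_mul, hQc 0, if_pos hN, zero_sub]
    have key : v * s 0 = ∑ d ∈ Icc 1 N, L.coeff d * v ^ d := by
      rw [hs, Finset.mul_sum]
      apply Finset.sum_congr rfl
      intro d hd
      simp only [mem_Icc] at hd
      have hvd : v ^ (d-1-0) * v = v ^ d := by
        rw [← pow_succ]; congr 1; omega
      calc v * (L.coeff d * v ^ (d-1-0)) = L.coeff d * (v ^ (d-1-0) * v) := by ring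
        _ = L.coeff d * v ^ d := by rw [hvd]
    rw [key]
    linear_combination -heval
  · obtain ⟨e', rfl⟩ : ∃ e', e = e' + 1 := ⟨e - 1, by omega⟩
    rw [coeff_X_mul, hQc, hQc]
    rcases lt_trichotomy (e' + 1) N with hlt | heq | hgt
    · rw [if_pos (by omega), if_pos hlt]
      have h1 : s e' = L.coeff (e'+1) * v ^ 0 + ∑ d ∈ Icc (e'+2) N, L.coeff d * v ^ (d - (e'+1)) := by
        rw [hs]
        beta_reduce
        have hins : Icc (e'+1) N = insert (e'+1) (Icc (e'+2) N) := by
          ext x; simp only [mem_Icc, mem_insert]; omega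
        rw [hins, Finset.sum_insert (by simp only [mem_Icc, not_and, not_le]; omega)]
        congr 1
        · rw [show e'+1-1-e' = 0 from by omega]
        · apply Finset.sum_congr rfl
          intro d hd
          simp only [mem_Icc] at hd
          rw [show d-1-e' = d-(e'+1) from by omega]
      have h2 : v * s (e'+1) = ∑ d ∈ Icc (e'+2) N, L.coeff d * v ^ (d - (e'+1)) := by
        rw [hs, Finset.mul_sum]
        apply Finset.sum_congr rfl
        intro d hd
        simp only [mem_Icc] at hd
        have hvd : v ^ (d-1-(e'+1)) * v = v ^ (d - (e'+1)) := by
          rw [← pow_succ]; congr 1; omega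
        calc v * (L.coeff d * v ^ (d-1-(e'+1))) = L.coeff d * (v ^ (d-1-(e'+1)) * v) := by ring
          _ = L.coeff d * v ^ (d-(e'+1)) := by rw [hvd]
      rw [h1, h2]
      ring
    · rw [if_pos (by omega), if_neg (by omega)]
      have : s e' = L.coeff N := by
        rw [hs]
        beta_reduce
        have : Icc (e'+1) N = {N} := by ext x; simp only [mem_Icc, mem_singleton]; omega
        rw [this, Finset.sum_singleton, show N - 1 - e' = 0 by omega, pow_zero, mul_one]
      rw [this, heq, mul_zero, sub_zero]
    · rw [if_neg (by omega), if_neg (by omega), mul_zero, sub_zero]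
      exact (coeff_eq_zero_of_natDegree_lt (by omega)).symm

private lemma derivProd {F : Type*} [Field F] [DecidableEq F] (T : Finset F) :
    derivative (∏ v ∈ T, (X - C v)) = ∑ v ∈ T, ∏ w ∈ T.erase v, (X - C w) := by
  induction T using Finset.induction_on with
  | empty => simp
  | insert a T ha ih =>
    rw [Finset.prod_insert ha, derivative_mul, derivative_sub, derivative_X, derivative_C,
      sub_zero, one_mul, ih, Finset.sum_insert ha, Finset.erase_insert ha, Finset.mul_sum]
    congr 1
    apply Finset.sum_congr rfl
    intro v hv
    have hva : v ≠ a := fun h => ha (h ▸ hv)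
    rw [Finset.erase_insert_of_ne hva.symm,
      Finset.prod_insert (fun h => ha (Finset.mem_of_mem_erase h))]

private lemma powsumT {F : Type*} [Field F] [DecidableEq F]
    (T : Finset F) (h0 : (0:F) ∈ T) (hsub : ∀ v ∈ T, ∀ w ∈ T, v - w ∈ T)
    {N : ℕ} (hcard : T.card = N) (hNF : ((N:ℕ) : F) = 0) (h2 : 2 ≤ N) :
    ∀ i, i ≤ N - 2 → ∑ a ∈ T, a ^ i = 0 := by
  set L : Polynomial F := ∏ v ∈ T, (X - C v) with hL
  have hmonic : L.Monic := monic_prod_of_monic _ _ fun v _ => monic_X_sub_C v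
  have hdeg : L.natDegree = N := by
    rw [hL, natDegree_prod_of_monic _ _ fun v _ => monic_X_sub_C v]
    simp [natDegree_X_sub_C, hcard]
  -- translation invariance
  have htrans : ∀ w ∈ T, L.comp (X + C w) = L := by
    intro w hw
    rw [hL, Polynomial.prod_comp]
    simp only [sub_comp, X_comp, C_comp]
    have hstep : ∀ v ∈ T, X + C w - C v = X - C (v - w) := by
      intro v _; rw [C_sub]; ring
    rw [Finset.prod_congr rfl hstep]
    have hinj : ∀ x ∈ T, ∀ y ∈ T, x - w = y - w → x = y := by
      intro x _ y _ h; exact sub_left_inj.mp h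
    have himg := Finset.prod_image (s := T) (f := fun u => (X : Polynomial F) - C u)
      (g := fun x => x - w) hinj
    rw [← himg]
    congr 1
    ext u
    simp only [Finset.mem_image]
    constructor
    · rintro ⟨v, hv, rfl⟩; exact hsub v hv w hw
    · intro hu
      have hw' : (0:F) - w ∈ T := hsub 0 h0 w hw
      exact ⟨u - ((0:F) - w), hsub u hu _ hw', by ring⟩
  -- derivative is constant
  have hconst : derivative L = C ((derivative L).eval 0) := by
    have hdd : (derivative L).natDegree ≤ N - 2 := by
      rw [natDegree_le_iff_coeff_eq_zero]
      intro M hM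
      rw [coeff_derivative]
      rcases eq_or_lt_of_le (show N - 1 ≤ M by omega) with h | h
      · have hMN : M + 1 = N := by omega
        have hcN : L.coeff N = 1 := by rw [← hdeg]; exact hmonic.coeff_natDegree
        rw [hMN, hcN, one_mul]
        rw [show ((M:F) + 1) = ((M+1 : ℕ) : F) from by push_cast; ring, hMN, hNF]
      · rw [coeff_eq_zero_of_natDegree_lt (by omega), zero_mul]
    have hevalc : ∀ w ∈ T, (derivative L).eval w = (derivative L).eval 0 := by
      intro w hw
      have h1 : derivative (L.comp (X + C w)) = derivative L := by rw [htrans w hw]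
      rw [derivative_comp, derivative_add, derivative_X, derivative_C, add_zero, one_mul] at h1
      have h2 := congrArg (Polynomial.eval 0) h1
      rw [eval_comp, eval_add, eval_X, eval_C, zero_add] at h2
      exact h2
    have hz : derivative L - C ((derivative L).eval 0) = 0 := by
      apply eq_zero_of_natDegree_lt_card_of_eval_eq_zero' _ T
      · intro w hw
        rw [eval_sub, eval_C, hevalc w hw, sub_self]
      · calc (derivative L - C ((derivative L).eval 0)).natDegree
            ≤ max (derivative L).natDegree (C ((derivative L).eval 0)).natDegree :=
              natDegree_sub_le _ _
          _ < N := by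
              rw [natDegree_C]
              rw [max_eq_left (Nat.zero_le _)]
              omega
          _ = T.card := hcard.symm
    linear_combination (norm := ring_nf) hz
  -- the quotient polynomials
  have hQv : ∀ v ∈ T, (∏ w ∈ T.erase v, (X - C w)) =
      ∑ m ∈ range N, C (∑ d ∈ Icc (m+1) N, L.coeff d * v ^ (d-1-m)) * X ^ m := by
    intro v hv
    apply mul_left_cancel₀ (X_sub_C_ne_zero v)
    rw [divQ L hdeg (by omega) v]
    · rw [hL, ← Finset.mul_prod_erase T _ hv]
    · rw [hL, eval_prod]
      apply Finset.prod_eq_zero hv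
      simp
  -- Newton-type identities
  have hNewton : ∀ m, 1 ≤ m → m ≤ N - 1 →
      ∑ d ∈ Icc (m+1) N, L.coeff d * (∑ v ∈ T, v ^ (d-1-m)) = 0 := by
    intro m hm1 hm2
    have h1 : derivative L = ∑ v ∈ T, ∑ m' ∈ range N, C (∑ d ∈ Icc (m'+1) N, L.coeff d * v ^ (d-1-m')) * X ^ m' := by
      rw [derivProd T]
      exact Finset.sum_congr rfl hQv
    have h2 := congrArg (fun P : Polynomial F => P.coeff m) h1
    rw [hconst] at h2
    rw [coeff_C, if_neg (by omega)] at h2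
    rw [finset_sum_coeff] at h2
    have h3 : ∀ v ∈ T, (∑ m' ∈ range N, C (∑ d ∈ Icc (m'+1) N, L.coeff d * v ^ (d-1-m')) * X ^ m').coeff m
        = ∑ d ∈ Icc (m+1) N, L.coeff d * v ^ (d-1-m) := by
      intro v _
      rw [finset_sum_coeff]
      simp only [coeff_C_mul, coeff_X_pow, mul_ite, mul_one, mul_zero]
      rw [Finset.sum_ite_eq (range N) m]
      rw [if_pos (Finset.mem_range.mpr (by omega))]
    rw [Finset.sum_congr rfl h3] at h2
    calc ∑ d ∈ Icc (m+1) N, L.coeff d * (∑ v ∈ T, v ^ (d-1-m))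
        = ∑ d ∈ Icc (m+1) N, ∑ v ∈ T, L.coeff d * v ^ (d-1-m) :=
          Finset.sum_congr rfl fun d _ => Finset.mul_sum _ _ _
      _ = 0 := by rw [Finset.sum_comm]; exact h2.symm
  -- strong induction
  intro i
  induction i using Nat.strong_induction_on with
  | _ i IH =>
    intro hi
    have hm1 : 1 ≤ N - 1 - i := by omega
    have hm2 : N - 1 - i ≤ N - 1 := by omega
    have h := hNewton (N - 1 - i) hm1 hm2
    rw [show Icc (N - 1 - i + 1) N = insert N (Icc (N - 1 - i + 1) (N-1)) from by
      ext x; simp only [mem_Icc, mem_insert]; omega] at h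
    rw [Finset.sum_insert (by simp only [mem_Icc, not_and, not_le]; omega)] at h
    have hcN : L.coeff N = 1 := by rw [← hdeg]; exact hmonic.coeff_natDegree
    rw [hcN, one_mul, show N - 1 - (N - 1 - i) = i from by omega] at h
    have hz : ∀ d ∈ Icc (N - 1 - i + 1) (N-1), L.coeff d * (∑ v ∈ T, v ^ (d-1-(N-1-i))) = 0 := by
      intro d hd
      simp only [mem_Icc] at hd
      rw [IH (d-1-(N-1-i)) (by omega) (by omega), mul_zero]
    rw [Finset.sum_eq_zero hz, add_zero] at h
    exact h

private lemma sumPowCard {F : Type*} [Field F] [Fintype F] [DecidableEq F] :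
    ∑ b : F, b ^ (Fintype.card F - 1) = -1 := by
  have hc2 : 2 ≤ Fintype.card F := Fintype.one_lt_card
  have hsplit := Finset.sum_erase_add Finset.univ (fun b : F => b ^ (Fintype.card F - 1))
    (Finset.mem_univ (0:F))
  beta_reduce at hsplit
  rw [zero_pow (by omega), add_zero] at hsplit
  rw [← hsplit]
  have hone : ∀ b ∈ Finset.univ.erase (0:F), b ^ (Fintype.card F - 1) = 1 := by
    intro b hb
    exact FiniteField.pow_card_sub_one_eq_one b (Finset.mem_erase.mp hb).1
  rw [Finset.sum_congr rfl hone, Finset.sum_const, Finset.card_erase_of_mem (Finset.mem_univ _),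
    Finset.card_univ, nsmul_eq_mul, mul_one, Nat.cast_sub (by omega), Nat.cast_one]
  rw [show ((Fintype.card F : F)) = 0 from by simp]
  ring

private lemma innerSum {F : Type*} [Field F] [Fintype F] {q : ℕ} (hq2 : 2 ≤ q)
    (hF : Fintype.card F = q ^ 2) (c : F) (j : ℕ) (hj : j ≤ q - 1) :
    ∑ b : F, b ^ j * (b ^ q + b - c) ^ (q - 1) =
      if j = q - 1 then (-1 : F) else 0 := by
  classical
  have hq1 : q - 1 + 1 = q := by omega
  have hqq : q * (q - 1) + q = q * q := by
    calc q * (q - 1) + q = q * (q - 1 + 1) := (Nat.mul_succ q (q-1)).symm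
      _ = q * q := by rw [hq1]
  have hq2q : q * 2 ≤ q * q := Nat.mul_le_mul_left q hq2
  have key : ∀ b : F, b ^ j * (b ^ q + b - c) ^ (q - 1) =
      ∑ u ∈ range q, ∑ r ∈ range (u + 1),
        (((q-1).choose u : F) * (u.choose r : F) * (-c) ^ (q - 1 - u)) * b ^ (j + q * r + (u - r)) := by
    intro b
    rw [sub_eq_add_neg, add_pow, hq1, Finset.mul_sum]
    apply Finset.sum_congr rfl
    intro u hu
    rw [add_pow, Finset.sum_mul, Finset.sum_mul, Finset.mul_sum]
    apply Finset.sum_congr rfl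
    intro r hr
    rw [pow_add, pow_add, pow_mul]
    ring
  simp only [key]
  rw [Finset.sum_comm]
  have step : ∀ u ∈ range q, (∑ b : F, ∑ r ∈ range (u+1),
        (((q-1).choose u : F) * (u.choose r : F) * (-c) ^ (q - 1 - u)) * b ^ (j + q * r + (u - r)))
      = ∑ r ∈ range (u+1),
        (((q-1).choose u : F) * (u.choose r : F) * (-c) ^ (q - 1 - u)) * ∑ b : F, b ^ (j + q * r + (u - r)) := by
    intro u _
    rw [Finset.sum_comm]
    exact Finset.sum_congr rfl fun r _ => (Finset.mul_sum _ _ _).symm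
  rw [Finset.sum_congr rfl step]
  have hzero : ∀ u, u < q → ∀ r, r < u + 1 → ¬(j = q-1 ∧ u = q-1 ∧ r = q-1) →
      (∑ b : F, b ^ (j + q * r + (u - r))) = 0 := by
    intro u hu r hr hne
    apply FiniteField.sum_pow_lt_card_sub_one
    rw [hF, pow_two]
    by_cases hr' : r ≤ q - 2
    · have h1 : q * r ≤ q * (q-2) := Nat.mul_le_mul_left q hr'
      have h2 : q * (q-2) + q * 2 = q * q := by
        rw [← Nat.mul_add, Nat.sub_add_cancel hq2]
      omega
    · have hr2 : r = q - 1 := by omega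
      have hu2 : u = q - 1 := by omega
      have hj2 : j ≤ q - 2 := by
        have : ¬(j = q - 1) := fun h => hne ⟨h, hu2, hr2⟩
        omega
      rw [hr2, hu2]
      omega
  by_cases hjq : j = q - 1
  · rw [if_pos hjq]
    rw [Finset.sum_eq_single (q-1)]
    · rw [Finset.sum_eq_single (q-1)]
      · rw [Nat.choose_self, Nat.cast_one, one_mul, one_mul, Nat.sub_self, pow_zero, one_mul]
        rw [show j + q * (q-1) + 0 = Fintype.card F - 1 from by rw [hF, pow_two]; omega]
        exact sumPowCard
      · intro r hr hrne
        rw [hzero (q-1) (by omega) r (by simpa using hr) (by tauto), mul_zero]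
      · intro h
        exact absurd (Finset.mem_range.mpr (by omega)) h
    · intro u hu hune
      apply Finset.sum_eq_zero
      intro r hr
      rw [hzero u (by simpa using hu) r (by simpa using hr) (by tauto), mul_zero]
    · intro h
      exact absurd (Finset.mem_range.mpr (by omega)) h
  · rw [if_neg hjq]
    apply Finset.sum_eq_zero
    intro u hu
    apply Finset.sum_eq_zero
    intro r hr
    rw [hzero u (by simpa using hu) r (by simpa using hr) (by tauto), mul_zero]

theorem stmt_15 (p t q k : ℕ) (hp : p.Prime) (ht : 1 ≤ t) (hq : q = p ^ t)
    (F : Type*) [Field F] [Fintype F] (hF : Fintype.card F = q ^ 2)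
    (V : AddSubgroup F) (hk : k ≤ 2 * t) (hVcard : Nat.card V = p ^ k)
    (S : Finset (F × F))
    (hS : ∀ ab : F × F, ab ∈ S ↔
      (ab.1 ∈ V ∧ ab.2 ^ q + ab.2 = ab.1 ^ (q + 1))) :
    ∀ i j : ℕ, j ≤ q - 1 → q * i + (q + 1) * j ≤ q * p ^ k + q ^ 2 - q - 2 →
      ∑ ab ∈ S, ab.1 ^ i * ab.2 ^ j = 0 := by
  classical
  intro i j hj hle
  haveI hpf : Fact p.Prime := ⟨hp⟩
  have hp2 : 2 ≤ p := hp.two_le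
  have hq2 : 2 ≤ q := by
    have := Nat.one_lt_pow (show t ≠ 0 by omega) (show 1 < p by omega)
    omega
  have hq1 : q - 1 + 1 = q := by omega
  have hqq : q * (q - 1) + q = q * q := by
    calc q * (q - 1) + q = q * (q - 1 + 1) := (Nat.mul_succ q (q-1)).symm
      _ = q * q := by rw [hq1]
  have hq2q : q * 2 ≤ q * q := Nat.mul_le_mul_left q hq2
  -- characteristic
  have hcast : ((Fintype.card F : ℕ) : F) = 0 := FiniteField.cast_card_eq_zero F
  have hpF : (p : F) = 0 := by
    rw [hF, hq, ← pow_mul] at hcast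
    push_cast at hcast
    exact (pow_eq_zero_iff (show t * 2 ≠ 0 by omega)).mp hcast
  haveI hchar : CharP F p := by
    have hr : CharP F (ringChar F) := ringChar.charP F
    have hrp : ringChar F ∣ p := (CharP.cast_eq_zero_iff F (ringChar F) p).mp hpF
    have hrprime : (ringChar F).Prime := CharP.char_is_prime F (ringChar F)
    have : ringChar F = p := (Nat.prime_dvd_prime_iff_eq hrprime hp).mp hrp
    rwa [this] at hr
  -- Frobenius facts
  have frobadd : ∀ x y : F, (x + y) ^ q = x ^ q + y ^ q := by
    intro x y; rw [hq]; exact add_pow_char_pow x y (p := p) t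
  have frobsub : ∀ x y : F, (x - y) ^ q = x ^ q - y ^ q := by
    intro x y; rw [hq]; exact sub_pow_char_pow x y (p := p) t
  have hcardb : ∀ x : F, x ^ (q * q) = x := by
    intro x
    have h := FiniteField.pow_card x
    rwa [hF, pow_two] at h
  -- rewrite S
  have hSf : S = Finset.univ.filter
      (fun ab : F × F => ab.1 ∈ V ∧ ab.2 ^ q + ab.2 = ab.1 ^ (q + 1)) := by
    ext ab
    simp [hS ab]
  rw [hSf]
  simp only [Finset.sum_filter, Fintype.sum_prod_type]
  -- inner sum evaluation
  have hsumj : (∑ b : F, b ^ j) = 0 := by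
    apply FiniteField.sum_pow_lt_card_sub_one
    rw [hF, pow_two]
    omega
  have hinner : ∀ a : F,
      (∑ b : F, if a ∈ V ∧ b ^ q + b = a ^ (q + 1) then a ^ i * b ^ j else 0)
        = if a ∈ V then (if j = q - 1 then a ^ i else 0) else 0 := by
    intro a
    by_cases haV : a ∈ V
    · simp only [haV, true_and, if_true]
      have hpt : ∀ b : F, (if b ^ q + b = a ^ (q + 1) then a ^ i * b ^ j else 0)
          = a ^ i * (b ^ j * (1 - (b ^ q + b - a ^ (q + 1)) ^ (q - 1))) := by
        intro b
        by_cases hb : b ^ q + b = a ^ (q + 1)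
        · rw [if_pos hb, hb, sub_self, zero_pow (show q - 1 ≠ 0 by omega), sub_zero, mul_one]
        · rw [if_neg hb]
          have hxne : b ^ q + b - a ^ (q + 1) ≠ 0 := sub_ne_zero.mpr hb
          have hx : (b ^ q + b - a ^ (q + 1)) ^ q = b ^ q + b - a ^ (q + 1) := by
            calc (b ^ q + b - a ^ (q + 1)) ^ q
                = (b ^ q + b) ^ q - (a ^ (q + 1)) ^ q := frobsub _ _
              _ = ((b ^ q) ^ q + b ^ q) - (a ^ (q + 1)) ^ q := by rw [frobadd]
              _ = (b ^ (q * q) + b ^ q) - a ^ ((q + 1) * q) := by rw [← pow_mul, ← pow_mul]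
              _ = (b + b ^ q) - a ^ (q * q + q) := by
                  rw [hcardb b, show (q + 1) * q = q * q + q from by ring]
              _ = (b + b ^ q) - a ^ (q * q) * a ^ q := by rw [pow_add]
              _ = (b + b ^ q) - a * a ^ q := by rw [hcardb a]
              _ = b ^ q + b - a ^ (q + 1) := by rw [pow_succ]; ring
          have hx1 : (b ^ q + b - a ^ (q + 1)) ^ (q - 1) = 1 := by
            apply mul_right_cancel₀ hxne
            calc (b ^ q + b - a ^ (q + 1)) ^ (q - 1) * (b ^ q + b - a ^ (q + 1))
                = (b ^ q + b - a ^ (q + 1)) ^ (q - 1 + 1) := (pow_succ _ _).symm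
              _ = (b ^ q + b - a ^ (q + 1)) ^ q := by rw [hq1]
              _ = b ^ q + b - a ^ (q + 1) := hx
              _ = 1 * (b ^ q + b - a ^ (q + 1)) := (one_mul _).symm
          rw [hx1, sub_self, mul_zero, mul_zero]
      rw [Finset.sum_congr rfl fun b _ => hpt b, ← Finset.mul_sum]
      have hsplit : (∑ b : F, b ^ j * (1 - (b ^ q + b - a ^ (q + 1)) ^ (q - 1)))
          = (∑ b : F, b ^ j) - ∑ b : F, b ^ j * (b ^ q + b - a ^ (q + 1)) ^ (q - 1) := by
        rw [← Finset.sum_sub_distrib]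
        exact Finset.sum_congr rfl fun b _ => by ring
      rw [hsplit, innerSum hq2 hF (a ^ (q + 1)) j hj, hsumj]
      split_ifs with h <;> ring
    · simp [haV]
  rw [Finset.sum_congr rfl fun a (_ : a ∈ Finset.univ) => hinner a]
  by_cases hjq : j = q - 1
  · simp only [hjq, eq_self_iff_true, if_true]
    rw [← Finset.sum_filter]
    -- arithmetic: i ≤ p^k - 2
    have hpk1 : 1 ≤ p ^ k := Nat.one_le_pow _ _ (by omega)
    have hBq : q * 1 ≤ q * p ^ k := Nat.mul_le_mul_left q hpk1
    have hmul : q * (i + 1) = q * i + q := Nat.mul_succ q i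
    have hle' : q * i + (q * (q - 1) + (q - 1)) ≤ q * p ^ k + q * q - q - 2 := by
      rw [hjq, add_mul, one_mul, pow_two] at hle
      omega
    have hlt : q * (i + 1) < q * p ^ k := by omega
    have hik : i + 1 < p ^ k := Nat.lt_of_mul_lt_mul_left hlt
    have hk0 : k ≠ 0 := by
      intro h
      rw [h, pow_zero] at hik
      omega
    -- apply powsumT
    apply powsumT (Finset.univ.filter (· ∈ V))
      (Finset.mem_filter.mpr ⟨Finset.mem_univ _, V.zero_mem⟩)
      (fun v hv w hw => Finset.mem_filter.mpr
        ⟨Finset.mem_univ _, V.sub_mem (Finset.mem_filter.mp hv).2 (Finset.mem_filter.mp hw).2⟩)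
      (N := p ^ k)
    · rw [← hVcard, Nat.card_eq_fintype_card]
      rw [Fintype.card_subtype]
    · push_cast
      rw [hpF, zero_pow hk0]
    · omega
    · omega
  · simp [hjq]
end
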